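/- arXiv:2512.23420 — 2 statements merged into one kernel-verified Lean document; each statement's English description precedes it below -/
import Mathlib

section
/- Let $x : [0,1] \to \mathbb{R}$ be continuously differentiable, let $a, b, k_1, k_2 \in \mathbb{R}$, and set $\bar k_1 = \max\{0, -a k_1\}$. Assume $\bar k_1 - a < 0$. Then $a k_2 x(1)^2 - a k_1 x(0)^2 - a\int_0^1 x'(\xi)^2 d\xi + b\int_0^1 x(\xi)^2 d\xi \le \left(a k_2 + \tfrac{\bar k_1}{2} + \tfrac{a}{2}\right) x(1)^2 + \left(\tfrac{5}{4}\bar k_1 - \tfrac{a}{4} + b\right) \int_0^1 x(\xi)^2 d\xi$. -/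
/-!
Writing `x(ξ)² = x(1)² - ∫_ξ^1 2 x x'` and bounding `-2 x x' ≤ c x'² + c⁻¹ x²` gives
`x(ξ)² ≤ x(1)² + c ∫ x'² + c⁻¹ ∫ x²` for every `ξ ∈ [0,1]`. With `c = 1` at `ξ = 0` this is the
Agmon inequality combined with Young's; with `c = 2`, integrated over `ξ`, it is the Poincaré
inequality. The Agmon bound controls the boundary term `-a k₁ x(0)² ≤ k̄₁ x(0)²`, and the
Poincaré bound, multiplied by `a - k̄₁ > 0`, absorbs the remaining `-(a - k̄₁) ∫ x'²`.
-/

open intervalIntegral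

lemma neg_two_mul_le_mul_sq_add_inv_mul_sq {c : ℝ} (hc : 0 < c) (u v : ℝ) :
    -(2 * u * v) ≤ c * v ^ 2 + c⁻¹ * u ^ 2 := by
  have key : c * v ^ 2 + c⁻¹ * u ^ 2 + 2 * u * v = (c * v + u) ^ 2 / c := by
    field_simp
    ring
  have : 0 ≤ (c * v + u) ^ 2 / c := by positivity
  linarith

section

variable {x : ℝ → ℝ}

lemma integral_two_mul_mul_deriv (hx : ContDiff ℝ 1 x) (s t : ℝ) :
    ∫ u in s..t, 2 * x u * deriv x u = x t ^ 2 - x s ^ 2 := by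
  have hderiv (u : ℝ) : HasDerivAt (fun v => x v ^ 2) (2 * x u * deriv x u) u := by
    simpa using ((hx.differentiable one_ne_zero) u).hasDerivAt.fun_pow 2
  have hcont : Continuous fun u => 2 * x u * deriv x u := by
    have := hx.continuous_deriv le_rfl
    fun_prop
  exact integral_eq_sub_of_hasDerivAt (fun u _ => hderiv u) (hcont.intervalIntegrable s t)

lemma sq_le_sq_add_mul_integral_deriv_sq_add_inv_mul_integral_sq (hx : ContDiff ℝ 1 x)
    {c s ξ t : ℝ} (hc : 0 < c) (hsξ : s ≤ ξ) (hξt : ξ ≤ t) :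
    x ξ ^ 2 ≤ x t ^ 2 + c * (∫ u in s..t, deriv x u ^ 2) + c⁻¹ * ∫ u in s..t, x u ^ 2 := by
  have hx_cont := hx.continuous
  have hx'_cont := hx.continuous_deriv le_rfl
  set f := fun u => c * deriv x u ^ 2 + c⁻¹ * x u ^ 2
  have hf_cont : Continuous f := by fun_prop
  have hf_nonneg (u : ℝ) : 0 ≤ f u := by positivity
  have hfund : x t ^ 2 - x ξ ^ 2 = ∫ u in ξ..t, 2 * x u * deriv x u :=
    (integral_two_mul_mul_deriv hx ξ t).symm
  have hyoung : ∫ u in ξ..t, -(2 * x u * deriv x u) ≤ ∫ u in ξ..t, f u := by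
    refine integral_mono_on hξt (Continuous.intervalIntegrable (by fun_prop) _ _)
      (hf_cont.intervalIntegrable _ _) fun u _ => ?_
    exact neg_two_mul_le_mul_sq_add_inv_mul_sq hc (x u) (deriv x u)
  have hextend : ∫ u in ξ..t, f u ≤ ∫ u in s..t, f u := by
    rw [← integral_add_adjacent_intervals (hf_cont.intervalIntegrable s ξ)
      (hf_cont.intervalIntegrable ξ t)]
    have hleft : 0 ≤ ∫ u in s..ξ, f u := integral_nonneg hsξ fun u _ => hf_nonneg u
    linarith
  have hsplit : ∫ u in s..t, f u
      = c * (∫ u in s..t, deriv x u ^ 2) + c⁻¹ * ∫ u in s..t, x u ^ 2 := by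
    rw [integral_add (Continuous.intervalIntegrable (by fun_prop) _ _)
      (Continuous.intervalIntegrable (by fun_prop) _ _), integral_const_mul, integral_const_mul]
  rw [integral_neg, ← hfund] at hyoung
  linarith

lemma sq_zero_le_sq_one_add_integral_deriv_sq_add_integral_sq (hx : ContDiff ℝ 1 x) :
    x 0 ^ 2 ≤ x 1 ^ 2 + ((∫ u in (0:ℝ)..1, deriv x u ^ 2) + ∫ u in (0:ℝ)..1, x u ^ 2) := by
  have := sq_le_sq_add_mul_integral_deriv_sq_add_inv_mul_integral_sq hx one_pos
    le_rfl zero_le_one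
  rwa [one_mul, inv_one, one_mul, add_assoc] at this

lemma integral_sq_le_two_mul_sq_one_add_four_mul_integral_deriv_sq (hx : ContDiff ℝ 1 x) :
    ∫ u in (0:ℝ)..1, x u ^ 2 ≤ 2 * x 1 ^ 2 + 4 * ∫ u in (0:ℝ)..1, deriv x u ^ 2 := by
  set I := ∫ u in (0:ℝ)..1, deriv x u ^ 2
  set J := ∫ u in (0:ℝ)..1, x u ^ 2
  have hpoint (ξ : ℝ) (hξ : ξ ∈ Set.Icc (0:ℝ) 1) : x ξ ^ 2 ≤ x 1 ^ 2 + 2 * I + 2⁻¹ * J :=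
    sq_le_sq_add_mul_integral_deriv_sq_add_inv_mul_integral_sq hx two_pos hξ.1 hξ.2
  have hJ : J ≤ ∫ _ in (0:ℝ)..1, (x 1 ^ 2 + 2 * I + 2⁻¹ * J) := by
    have := hx.continuous
    exact integral_mono_on zero_le_one (Continuous.intervalIntegrable (by fun_prop) _ _)
      intervalIntegrable_const hpoint
  simp only [integral_const, sub_zero, one_smul] at hJ
  linarith

end

theorem lyapunov_estimate_chain (x : ℝ → ℝ) (hx : ContDiff ℝ 1 x)
    (a b k₁ k₂ : ℝ) (k₁bar : ℝ) (hk₁bar : k₁bar = max 0 (-(a * k₁)))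
    (h1 : k₁bar - a < 0) :
    a * k₂ * (x 1) ^ 2 - a * k₁ * (x 0) ^ 2
      - a * (∫ ξ in (0:ℝ)..1, (deriv x ξ) ^ 2)
      + b * (∫ ξ in (0:ℝ)..1, (x ξ) ^ 2)
    ≤ (a * k₂ + k₁bar / 2 + a / 2) * (x 1) ^ 2
      + (5 / 4 * k₁bar - a / 4 + b) * (∫ ξ in (0:ℝ)..1, (x ξ) ^ 2) := by
  have hk₁bar_nonneg : 0 ≤ k₁bar := hk₁bar ▸ le_max_left _ _
  have hk₁bar_ge : -(a * k₁) ≤ k₁bar := hk₁bar ▸ le_max_right _ _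
  have hboundary := mul_le_mul_of_nonneg_right hk₁bar_ge (sq_nonneg (x 0))
  have hagmon := mul_le_mul_of_nonneg_left
    (sq_zero_le_sq_one_add_integral_deriv_sq_add_integral_sq hx) hk₁bar_nonneg
  have hpoincare := mul_le_mul_of_nonneg_left
    (integral_sq_le_two_mul_sq_one_add_four_mul_integral_deriv_sq hx) (sub_nonneg.2 h1.le)
  linarith
end

section
/- Let $a, b, k_1, k_2 \in \mathbb{R}$ with $\bar k_1 = \max\{0, -a k_1\}$ satisfying $\bar k_1 - a < 0$, $5\bar k_1 - a + 4b < 0$, and $2 a k_2 + \bar k_1 + a < 0$. Suppose $x : [0,1] \times [0,\infty) \to \mathbb{R}$ is a classical solution of $x_t = a x_{\xi\xi} + b x$ with $x_\xi(0,t) = k_1 x(0,t)$ and $x_\xi(1,t) = k_2 x(1,t)$, with $x(\cdot, t)$ twice continuously differentiable in $\xi$ and $V(t) = \tfrac12 \int_0^1 x(\xi,t)^2\,d\xi$ differentiable in $t$ with $V'(t) = \int_0^1 x\, x_t\,d\xi$. Then there exists $\mu > 0$ such that $V'(t) \le -\mu\, V(t)$ for all $t \ge 0$, and hence $V(t) \le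 V(0) e^{-\mu t}$, so $\int_0^1 x(\xi,t)^2 d\xi \to 0$ as $t \to \infty$. -/
/-!
`V` is a Lyapunov function. Multiplying the equation by `x` and integrating by parts gives
`V' = a (k₂ x(1)² - k₁ x(0)²) - a ‖x_ξ‖² + b ‖x‖²`. Both the trace bound
`x(0)² ≤ x(1)² + ‖x‖² + ‖x_ξ‖²` and the Poincaré-type bound `‖x‖² ≤ 2 x(1)² + 4 ‖x_ξ‖²` come from
`x(ξ)² = x(1)² - ∫_ξ^1 2 x x_ξ` and AM-GM. With them the dissipation `-(a - k̄₁) ‖x_ξ‖²` absorbs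
the boundary term at `0`, the boundary term at `1` has the sign of `2 a k₂ + k̄₁ + a < 0`, and
`V' ≤ -μ V` with `μ = (a - 5 k̄₁ - 4 b) / 2`; Grönwall's inequality then gives exponential decay.
-/

open intervalIntegral Set Real Filter

section EnergyEstimates

variable {f : ℝ → ℝ}

theorem integral_two_mul_mul_deriv_s5 (hf : ContDiff ℝ 1 f) (c d : ℝ) :
    ∫ z in c..d, 2 * (f z * deriv f z) = f d ^ 2 - f c ^ 2 := by
  have hfd : Differentiable ℝ f := hf.differentiable one_ne_zero
  have hf'c := hf.continuous_deriv le_rfl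
  refine integral_eq_sub_of_hasDerivAt (f := fun z => f z ^ 2) (fun z _ => ?_)
    (Continuous.intervalIntegrable (by fun_prop) _ _)
  exact ((hfd z).hasDerivAt.fun_pow 2).congr_deriv (by norm_num; ring)

theorem sq_le_sq_one_add_integral (hf : ContDiff ℝ 1 f) {ε : ℝ} (hε : 0 < ε) {ξ : ℝ}
    (hξ : ξ ∈ Icc (0 : ℝ) 1) :
    f ξ ^ 2 ≤ f 1 ^ 2 + ∫ z in (0 : ℝ)..1, (ε * f z ^ 2 + ε⁻¹ * deriv f z ^ 2) := by
  have hfc := hf.continuous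
  have hf'c := hf.continuous_deriv le_rfl
  have hg : Continuous fun z => ε * f z ^ 2 + ε⁻¹ * deriv f z ^ 2 := by fun_prop
  have amgm : ∀ z, -(2 * (f z * deriv f z)) ≤ ε * f z ^ 2 + ε⁻¹ * deriv f z ^ 2 := by
    intro z
    have : ε * f z ^ 2 + ε⁻¹ * deriv f z ^ 2 + 2 * (f z * deriv f z)
        = ε⁻¹ * (ε * f z + deriv f z) ^ 2 := by field_simp; ring
    nlinarith [mul_nonneg (inv_nonneg.2 hε.le) (sq_nonneg (ε * f z + deriv f z))]
  calc f ξ ^ 2 = f 1 ^ 2 + ∫ z in ξ..1, -(2 * (f z * deriv f z)) := by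
        rw [intervalIntegral.integral_neg, integral_two_mul_mul_deriv_s5 hf]; ring
    _ ≤ f 1 ^ 2 + ∫ z in ξ..1, (ε * f z ^ 2 + ε⁻¹ * deriv f z ^ 2) := by
        gcongr
        exact integral_mono_on hξ.2 (Continuous.intervalIntegrable (by fun_prop) _ _)
          (hg.intervalIntegrable _ _) fun z _ => amgm z
    _ ≤ f 1 ^ 2 + ∫ z in (0 : ℝ)..1, (ε * f z ^ 2 + ε⁻¹ * deriv f z ^ 2) := by
        gcongr
        exact integral_mono_interval hξ.1 hξ.2 le_rfl
          (.of_forall fun z => by positivity) (hg.intervalIntegrable _ _)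

theorem integral_sq_le_sq_one_add_integral_deriv_sq (hf : ContDiff ℝ 1 f) :
    ∫ z in (0 : ℝ)..1, f z ^ 2 ≤ 2 * f 1 ^ 2 + 4 * ∫ z in (0 : ℝ)..1, deriv f z ^ 2 := by
  have hfc := hf.continuous
  have hf'c := hf.continuous_deriv le_rfl
  have hsq : IntervalIntegrable (fun z => f z ^ 2) MeasureTheory.volume 0 1 :=
    Continuous.intervalIntegrable (by fun_prop) _ _
  have hsq' : IntervalIntegrable (fun z => deriv f z ^ 2) MeasureTheory.volume 0 1 :=
    Continuous.intervalIntegrable (by fun_prop) _ _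
  have hbound := integral_mono_on zero_le_one hsq intervalIntegrable_const
    fun ξ hξ => sq_le_sq_one_add_integral hf (ε := 1 / 2) (by norm_num) hξ
  rw [intervalIntegral.integral_const,
    integral_add (hsq.const_mul _) (by simpa using hsq'.const_mul 2),
    integral_const_mul, integral_const_mul] at hbound
  norm_num at hbound
  linarith

theorem integral_mul_deriv_deriv (hf : ContDiff ℝ 2 f) (c d : ℝ) :
    ∫ z in c..d, f z * deriv (deriv f) z
      = f d * deriv f d - f c * deriv f c - ∫ z in c..d, deriv f z ^ 2 := by
  have hf' : ContDiff ℝ 1 (deriv f) := hf.deriv'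
  rw [integral_mul_deriv_eq_deriv_mul
    (fun z _ => (hf.differentiable two_ne_zero z).hasDerivAt)
    (fun z _ => (hf'.differentiable one_ne_zero z).hasDerivAt)
    ((hf.continuous_deriv one_le_two).intervalIntegrable _ _)
    ((hf'.continuous_deriv le_rfl).intervalIntegrable _ _)]
  simp only [sq]

theorem integral_mul_robin_heat_le {a b k₁ k₂ k₁bar : ℝ} (hk₁bar_nonneg : 0 ≤ k₁bar)
    (hk₁bar_ge : -(a * k₁) ≤ k₁bar) (hk₁bar_le : k₁bar ≤ a) (hk₂ : 2 * a * k₂ + k₁bar + a ≤ 0)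
    (hf : ContDiff ℝ 2 f) (hb0 : deriv f 0 = k₁ * f 0) (hb1 : deriv f 1 = k₂ * f 1) :
    ∫ z in (0 : ℝ)..1, f z * (a * deriv (deriv f) z + b * f z)
      ≤ (5 * k₁bar - a + 4 * b) / 4 * ∫ z in (0 : ℝ)..1, f z ^ 2 := by
  have hf1 : ContDiff ℝ 1 f := hf.of_le one_le_two
  have hfc := hf.continuous
  have hf'c := hf.continuous_deriv one_le_two
  have hf''c := (hf.deriv' (n := 1)).continuous
  set A := ∫ z in (0 : ℝ)..1, f z ^ 2
  set B := ∫ z in (0 : ℝ)..1, deriv f z ^ 2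
  have hsplit : ∫ z in (0 : ℝ)..1, f z * (a * deriv (deriv f) z + b * f z)
      = a * (∫ z in (0 : ℝ)..1, f z * deriv (deriv f) z) + b * A := by
    simp only [mul_add, mul_left_comm (f _), ← sq]
    rw [integral_add (Continuous.intervalIntegrable (by fun_prop) _ _)
      (Continuous.intervalIntegrable (by fun_prop) _ _), integral_const_mul, integral_const_mul]
  have htrace : f 0 ^ 2 ≤ f 1 ^ 2 + A + B := by
    have h := sq_le_sq_one_add_integral hf1 one_pos (ξ := 0) (by norm_num)
    simp only [one_mul, inv_one] at h
    rwa [integral_add (Continuous.intervalIntegrable (by fun_prop) _ _)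
      (Continuous.intervalIntegrable (by fun_prop) _ _), ← add_assoc] at h
  have hpoincare : A ≤ 2 * f 1 ^ 2 + 4 * B := integral_sq_le_sq_one_add_integral_deriv_sq hf1
  rw [hsplit, integral_mul_deriv_deriv hf, hb0, hb1]
  nlinarith [mul_le_mul_of_nonneg_right hk₁bar_ge (sq_nonneg (f 0)),
    mul_le_mul_of_nonneg_left htrace hk₁bar_nonneg,
    mul_le_mul_of_nonneg_left hpoincare (sub_nonneg.2 hk₁bar_le),
    mul_nonpos_of_nonpos_of_nonneg hk₂ (sq_nonneg (f 1))]

end EnergyEstimates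

theorem le_mul_exp_of_hasDerivAt_le_mul {V V' : ℝ → ℝ} {K s : ℝ}
    (hV : ∀ t ≥ s, HasDerivAt V (V' t) t) (hbound : ∀ t ≥ s, V' t ≤ K * V t) {t : ℝ}
    (ht : s ≤ t) : V t ≤ V s * exp (K * (t - s)) := by
  have h := le_gronwallBound_of_liminf_deriv_right_le (f' := V') (δ := V s) (ε := 0) (b := t)
    (fun τ hτ => (hV τ hτ.1).continuousAt.continuousWithinAt)
    (fun τ hτ _ hr => (hV τ hτ.1).hasDerivWithinAt.liminf_right_slope_le hr) le_rfl
    (fun τ hτ => by simpa using hbound τ hτ.1) t ⟨ht, le_rfl⟩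
  rwa [gronwallBound_ε0] at h

theorem pde_asymptotic_stability (a b k₁ k₂ : ℝ) (k₁bar : ℝ)
    (hk₁bar : k₁bar = max 0 (-(a * k₁)))
    (h1 : k₁bar - a < 0) (h2 : 5 * k₁bar - a + 4 * b < 0)
    (h3 : 2 * a * k₂ + k₁bar + a < 0)
    (x : ℝ → ℝ → ℝ)
    (hsmooth : ∀ t ≥ (0:ℝ), ContDiff ℝ 2 (fun ξ => x ξ t))
    (hpde : ∀ ξ ∈ Set.Icc (0:ℝ) 1, ∀ t ≥ (0:ℝ),
      HasDerivAt (fun s => x ξ s)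
        (a * deriv (deriv (fun z => x z t)) ξ + b * x ξ t) t)
    (hb0 : ∀ t ≥ (0:ℝ), deriv (fun z => x z t) 0 = k₁ * x 0 t)
    (hb1 : ∀ t ≥ (0:ℝ), deriv (fun z => x z t) 1 = k₂ * x 1 t)
    (V : ℝ → ℝ) (hV : ∀ t, V t = (1 / 2) * ∫ ξ in (0:ℝ)..1, (x ξ t) ^ 2)
    (hV' : ∀ t ≥ (0:ℝ),
      HasDerivAt V (∫ ξ in (0:ℝ)..1, x ξ t * deriv (fun s => x ξ s) t) t) :
    ∃ μ > (0:ℝ),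
      (∀ t ≥ (0:ℝ), deriv V t ≤ -μ * V t) ∧
      (∀ t ≥ (0:ℝ), V t ≤ V 0 * Real.exp (-μ * t)) ∧
      Filter.Tendsto (fun t => ∫ ξ in (0:ℝ)..1, (x ξ t) ^ 2)
        Filter.atTop (nhds 0) := by
  set μ := (a - 5 * k₁bar - 4 * b) / 2 with hμ_def
  have hμ : 0 < μ := by linarith
  have hdecay : ∀ t ≥ (0:ℝ), deriv V t ≤ -μ * V t := by
    intro t ht
    rw [(hV' t ht).deriv, hV t]
    calc ∫ ξ in (0:ℝ)..1, x ξ t * deriv (fun s => x ξ s) t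
        = ∫ ξ in (0:ℝ)..1, x ξ t * (a * deriv (deriv (fun z => x z t)) ξ + b * x ξ t) :=
          integral_congr fun ξ hξ => by
            rw [uIcc_of_le zero_le_one] at hξ
            rw [(hpde ξ hξ t ht).deriv]
      _ ≤ (5 * k₁bar - a + 4 * b) / 4 * ∫ ξ in (0:ℝ)..1, x ξ t ^ 2 :=
          integral_mul_robin_heat_le (hk₁bar ▸ le_max_left _ _) (hk₁bar ▸ le_max_right _ _)
            (sub_nonpos.1 h1.le) h3.le (hsmooth t ht) (hb0 t ht) (hb1 t ht)
      _ = -μ * (1 / 2 * ∫ ξ in (0:ℝ)..1, x ξ t ^ 2) := by ring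
  have hexp : ∀ t ≥ (0:ℝ), V t ≤ V 0 * exp (-μ * t) := fun t ht => by
    simpa using le_mul_exp_of_hasDerivAt_le_mul
      (fun s hs => (hV' s hs).differentiableAt.hasDerivAt) hdecay ht
  refine ⟨μ, hμ, hdecay, hexp, ?_⟩
  have hbound : Tendsto (fun t => 2 * V 0 * exp (-μ * t)) atTop (nhds 0) := by
    simpa using (tendsto_exp_comp_nhds_zero.2
      (tendsto_id.const_mul_atTop_of_neg (neg_neg_of_pos hμ))).const_mul (2 * V 0)
  refine squeeze_zero' (.of_forall fun t => integral_nonneg zero_le_one fun ξ _ => sq_nonneg _)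
    ((eventually_ge_atTop 0).mono fun t ht => ?_) hbound
  linarith [hV t, hexp t ht]
end
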